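/- arXiv:1109.2879 — 2 statements merged into one kernel-verified Lean document; each statement's English description precedes it below -/
import Mathlib

section
/- Let L be an even unimodular lattice, S ⊆ L a primitive nondegenerate sublattice, and S^⊥ = {x ∈ L : B(x, S) = 0} its orthogonal complement in L. An isometry φ of S can be extended to an isometry of L which restricts to the identity on S^⊥ if and only if φ induces the identity on the discriminant group A_S = S*/S. -/
/-!
Over `ℚ` the form is nondegenerate on `S ⊗ ℚ`, so `ℚᵐ = (S ⊗ ℚ) ⊕ (S ⊗ ℚ)^⊥`.

If `ψ` extends `φ` and fixes `S^⊥`, then for `x ∈ S*` the vector `ψ x - x` pairs integrally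
with every `l ∈ L`: the pairing equals `B(x, ψ⁻¹ l - l)`, and `ψ⁻¹ l - l` lies in
`(S^⊥)^⊥ ∩ L = S` by primitivity. Unimodularity puts `ψ x - x` in `L`, hence in `S`.

Conversely, let `Ψ` be the `ℚ`-linear extension of `φ` on `S ⊗ ℚ` and the identity on its
orthogonal complement; it is a rational isometry. Writing `l = a + b` along the decomposition,
`a` lies in `S*`, so `Ψ l - l = Ψ a - a ∈ S` and `Ψ` preserves `L`. An integral isometry `M` of a
nondegenerate lattice has `(det M)² = 1`, so `Ψ` restricts to an automorphism of `L`.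
-/

/-
The ambient even unimodular lattice `L` is formalized by its Gram matrix
`H : Matrix (Fin m) (Fin m) ℤ` with bilinear form `bilin H x y = x ⬝ᵥ H.mulVec y`
on `L = (Fin m → ℤ)`; a sublattice is a submodule `S ⊆ L`, and `S ⊗ ℚ` is realized as
the `ℚ`-span of `S` inside `Fin m → ℚ`.  The dual lattice `S*` consists of the vectors
of `S ⊗ ℚ` pairing integrally with all elements of `S`.  For `x ∈ S ⊗ ℚ` pick `d ≠ 0`
and `s ∈ S` with `d • x = s`; then the `ℚ`-linear extension of an isometry `φ` of `S`
sends `x` to `d⁻¹ • φ(s)`, and `φ` induces the identity on `A_S = S*/S` iff for every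
such `x ∈ S*` the vector `d⁻¹ • φ(s)` again lies in `S*` and differs from `x` by an
element of `S`.
-/

open Matrix

/-- The bilinear form of the lattice with Gram matrix `H`. -/
def bilin {m : ℕ} (H : Matrix (Fin m) (Fin m) ℤ) (x y : Fin m → ℤ) : ℤ :=
  x ⬝ᵥ H.mulVec y

/-- The `ℚ`-bilinear extension of the form of `H` to `L ⊗ ℚ = (Fin m → ℚ)`. -/
def bilinQ {m : ℕ} (H : Matrix (Fin m) (Fin m) ℤ) (x y : Fin m → ℚ) : ℚ :=
  x ⬝ᵥ (H.map (Int.cast : ℤ → ℚ)).mulVec y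

/-- The canonical inclusion `L = ℤᵐ ⊆ L ⊗ ℚ = ℚᵐ`. -/
def castVec {m : ℕ} (v : Fin m → ℤ) : Fin m → ℚ :=
  fun i => (v i : ℚ)

/-- The lattice is even. -/
def IsEvenLattice {m : ℕ} (H : Matrix (Fin m) (Fin m) ℤ) : Prop :=
  ∀ x : Fin m → ℤ, Even (bilin H x x)

/-- The lattice is unimodular: `x ↦ B(x,·)` is an isomorphism onto `Hom(L,ℤ)`,
equivalently the Gram matrix is invertible over `ℤ`. -/
def IsUnimodular {m : ℕ} (H : Matrix (Fin m) (Fin m) ℤ) : Prop :=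
  IsUnit H.det

open nonZeroDivisors

section Cast

variable {m : ℕ}

def castL (m : ℕ) : (Fin m → ℤ) →ₗ[ℤ] (Fin m → ℚ) :=
  LinearMap.pi fun i => Algebra.linearMap ℤ ℚ ∘ₗ LinearMap.proj i

@[simp]
theorem castL_apply (v : Fin m → ℤ) : castL m v = castVec v := rfl

theorem castVec_add (a b : Fin m → ℤ) : castVec (a + b) = castVec a + castVec b :=
  map_add (castL m) a b

theorem castVec_sub (a b : Fin m → ℤ) : castVec (a - b) = castVec a - castVec b :=
  map_sub (castL m) a b

theorem castVec_zsmul (d : ℤ) (a : Fin m → ℤ) : castVec (d • a) = d • castVec a :=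
  map_zsmul (castL m) d a

instance : IsLocalizedModule ℤ⁰ (castL m) :=
  IsLocalizedModule.pi _ _

theorem castVec_injective : Function.Injective (castVec (m := m)) :=
  fun _ _ h => funext fun i => Int.cast_injective (congrFun h i)

theorem exists_zsmul_eq_castVec (x : Fin m → ℚ) :
    ∃ d : ℤ, d ≠ 0 ∧ ∃ v, d • x = castVec v := by
  obtain ⟨⟨v, d⟩, h⟩ := IsLocalizedModule.surj ℤ⁰ (castL m) x
  exact ⟨d, nonZeroDivisors.coe_ne_zero d, v, h⟩

theorem eq_inv_smul_of_zsmul_eq {d : ℤ} (hd : d ≠ 0) {x y : Fin m → ℚ} (h : d • x = y) :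
    x = (d : ℚ)⁻¹ • y := by
  rw [← h, ← Int.cast_smul_eq_zsmul ℚ, inv_smul_smul₀ (Int.cast_ne_zero.mpr hd)]

theorem bilinQ_castVec (H : Matrix (Fin m) (Fin m) ℤ) (a b : Fin m → ℤ) :
    bilinQ H (castVec a) (castVec b) = bilin H a b := by
  simp only [bilinQ, bilin, castVec, dotProduct, mulVec, Matrix.map_apply]
  push_cast
  rfl

end Cast

section Form

variable {m : ℕ} {H : Matrix (Fin m) (Fin m) ℤ}

variable (H) in
def formQ : LinearMap.BilinForm ℚ (Fin m → ℚ) :=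
  Matrix.toBilin' (H.map (Int.cast : ℤ → ℚ))

theorem formQ_apply (x y : Fin m → ℚ) : formQ H x y = bilinQ H x y :=
  Matrix.toBilin'_apply' _ _ _

theorem formQ_castVec (a b : Fin m → ℤ) : formQ H (castVec a) (castVec b) = bilin H a b := by
  rw [formQ_apply, bilinQ_castVec]

theorem formQ_isSymm (hsymm : H.IsSymm) : (formQ H).IsSymm :=
  Matrix.isSymm_toBilin'_iff_isSymm.mpr (hsymm.map _)

theorem bilin_comm (hsymm : H.IsSymm) (a b : Fin m → ℤ) : bilin H a b = bilin H b a := by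
  have h := (formQ_isSymm hsymm).eq (castVec a) (castVec b)
  rwa [formQ_castVec, formQ_castVec, Int.cast_inj] at h

theorem det_map_intCast : (H.map (Int.cast : ℤ → ℚ)).det = H.det :=
  (RingHom.map_det (Int.castRingHom ℚ) H).symm

theorem formQ_nondegenerate (hH : H.det ≠ 0) : (formQ H).Nondegenerate :=
  LinearMap.BilinForm.nondegenerate_toBilin'_of_det_ne_zero' _ <| by
    rw [det_map_intCast]
    exact_mod_cast hH

theorem castVec_vecMul (v : Fin m → ℤ) (M : Matrix (Fin m) (Fin m) ℤ) :
    castVec (v ᵥ* M) = castVec v ᵥ* M.map (Int.cast : ℤ → ℚ) := by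
  funext j
  simp [castVec, vecMul, dotProduct]

theorem exists_castVec_eq_of_forall_bilinQ_int (huni : IsUnimodular H) {z : Fin m → ℚ}
    (hz : ∀ l, ∃ k : ℤ, bilinQ H z (castVec l) = k) : ∃ v, castVec v = z := by
  choose k hk using fun j => hz (Pi.single j 1)
  have hzH : z ᵥ* H.map (Int.cast : ℤ → ℚ) = castVec k := by
    funext j
    rw [castVec, ← hk j, bilinQ, dotProduct_mulVec]
    simp [castVec, vecMul, dotProduct, Pi.single_apply]
  refine ⟨k ᵥ* H⁻¹, ?_⟩
  have hinv : H.map (Int.cast : ℤ → ℚ) * H⁻¹.map Int.cast = 1 := by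
    simpa [Matrix.mul_nonsing_inv H huni] using
      (Matrix.map_mul (L := H) (M := H⁻¹) (f := Int.castRingHom ℚ)).symm
  rw [castVec_vecMul, ← hzH, vecMul_vecMul, hinv, vecMul_one]

theorem isUnit_det_of_isometry (hH : H.det ≠ 0) {f : (Fin m → ℤ) →ₗ[ℤ] (Fin m → ℤ)}
    (hf : ∀ x y, bilin H (f x) (f y) = bilin H x y) : IsUnit (LinearMap.toMatrix' f).det := by
  set M := LinearMap.toMatrix' f
  have hMHM : Mᵀ * H * M = H := by
    apply Matrix.toBilin'.injective
    rw [← Matrix.toBilin'_comp, Matrix.toLin'_toMatrix']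
    refine LinearMap.ext₂ fun x y => ?_
    simpa [Matrix.toBilin'_apply', bilin] using hf x y
  have hdet : M.det * M.det = 1 := by
    apply mul_left_cancel₀ hH
    have := congrArg Matrix.det hMHM
    rw [det_mul, det_mul, det_transpose] at this
    linear_combination this
  exact IsUnit.of_mul_eq_one _ hdet

end Form

section Sublattice

variable {m : ℕ} (S : Submodule ℤ (Fin m → ℤ))

/-- `S ⊗ ℚ`, presented as the localization of `S` at `ℤ ∖ {0}` so that isometries of `S`
extend `ℚ`-linearly by the universal property. -/
abbrev ratSpan : Submodule ℚ (Fin m → ℚ) :=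
  S.localized' ℚ ℤ⁰ (castL m)

theorem ratSpan_eq_span : ratSpan S = Submodule.span ℚ (castVec '' S) :=
  Submodule.localized'_eq_span ..

variable {S}

theorem castVec_mem_ratSpan {v : Fin m → ℤ} (hv : v ∈ S) : castVec v ∈ ratSpan S :=
  Submodule.map_le_localized₀ ℤ⁰ (castL m) S ⟨v, hv, rfl⟩

theorem exists_zsmul_eq_castVec_of_mem_ratSpan {x : Fin m → ℚ} (hx : x ∈ ratSpan S) :
    ∃ d : ℤ, d ≠ 0 ∧ ∃ s ∈ S, d • x = castVec s := by
  obtain ⟨s, hs, d, rfl⟩ := hx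
  exact ⟨d, nonZeroDivisors.coe_ne_zero d, s, hs, IsLocalizedModule.mk'_cancel' (castL m) s d⟩

theorem mem_of_castVec_mem_ratSpan (hprim : ∀ (y : Fin m → ℤ) (k : ℤ), k ≠ 0 → k • y ∈ S → y ∈ S)
    {v : Fin m → ℤ} (hv : castVec v ∈ ratSpan S) : v ∈ S := by
  obtain ⟨d, hd, s, hs, hds⟩ := exists_zsmul_eq_castVec_of_mem_ratSpan hv
  have hdv : d • v = s := castVec_injective ((castVec_zsmul d v).trans hds)
  exact hprim v d hd (hdv ▸ hs)

end Sublattice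

section Orthogonal

variable {m : ℕ} {H : Matrix (Fin m) (Fin m) ℤ} {S : Submodule ℤ (Fin m → ℤ)}

theorem formQ_zsmul_left (d : ℤ) (x y : Fin m → ℚ) : formQ H (d • x) y = d * formQ H x y := by
  rw [map_zsmul, LinearMap.smul_apply, zsmul_eq_mul]

theorem castVec_mem_orthogonal_iff (hsymm : H.IsSymm) {x : Fin m → ℤ} :
    castVec x ∈ (formQ H).orthogonal (ratSpan S) ↔ ∀ s ∈ S, bilin H x s = 0 := by
  simp only [LinearMap.BilinForm.mem_orthogonal_iff]
  constructor
  · intro h s hs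
    have hsx := h _ (castVec_mem_ratSpan hs)
    rw [formQ_castVec, Int.cast_eq_zero] at hsx
    rw [bilin_comm hsymm, hsx]
  · intro h n hn
    obtain ⟨d, hd, s, hs, hds⟩ := exists_zsmul_eq_castVec_of_mem_ratSpan hn
    have : (d : ℚ) * formQ H n (castVec x) = 0 := by
      rw [← formQ_zsmul_left, hds, formQ_castVec, bilin_comm hsymm, h s hs, Int.cast_zero]
    exact (mul_eq_zero.mp this).resolve_left (Int.cast_ne_zero.mpr hd)

theorem restrict_formQ_ratSpan_nondegenerate (hsymm : H.IsSymm)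
    (hndS : ∀ x ∈ S, (∀ y ∈ S, bilin H x y = 0) → x = 0) :
    ((formQ H).restrict (ratSpan S)).Nondegenerate := by
  refine (LinearMap.IsRefl.nondegenerate_iff_separatingLeft
    ((formQ_isSymm hsymm).isRefl.domRestrict _)).mpr ?_
  rintro ⟨x, hx⟩ hx0
  obtain ⟨d, hd, s, hs, hds⟩ := exists_zsmul_eq_castVec_of_mem_ratSpan hx
  have hs0 : s = 0 := hndS s hs fun u hu => by
    have : formQ H (castVec s) (castVec u) = 0 := by
      rw [← hds, formQ_zsmul_left,
        show formQ H x (castVec u) = 0 from hx0 ⟨_, castVec_mem_ratSpan hu⟩, mul_zero]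
    exact_mod_cast (formQ_castVec s u).symm.trans this
  rw [hs0] at hds
  ext1
  exact (smul_eq_zero.mp hds).resolve_left hd

theorem isCompl_ratSpan_orthogonal (hsymm : H.IsSymm)
    (hndS : ∀ x ∈ S, (∀ y ∈ S, bilin H x y = 0) → x = 0) :
    IsCompl (ratSpan S) ((formQ H).orthogonal (ratSpan S)) :=
  LinearMap.BilinForm.isCompl_orthogonal_of_restrict_nondegenerate (formQ_isSymm hsymm).isRefl
    (restrict_formQ_ratSpan_nondegenerate hsymm hndS)

theorem mem_of_forall_orthogonal_bilin_eq_zero (hsymm : H.IsSymm) (hH : H.det ≠ 0)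
    (hprim : ∀ (y : Fin m → ℤ) (k : ℤ), k ≠ 0 → k • y ∈ S → y ∈ S) {v : Fin m → ℤ}
    (hv : ∀ t, (∀ s ∈ S, bilin H t s = 0) → bilin H v t = 0) : v ∈ S := by
  apply mem_of_castVec_mem_ratSpan hprim
  rw [← LinearMap.BilinForm.orthogonal_orthogonal (formQ_nondegenerate hH)
    (formQ_isSymm hsymm).isRefl (ratSpan S)]
  intro t ht
  obtain ⟨d, hd, t₀, ht₀⟩ := exists_zsmul_eq_castVec t
  have ht₀S : ∀ s ∈ S, bilin H t₀ s = 0 :=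
    (castVec_mem_orthogonal_iff hsymm).mp (ht₀ ▸ Submodule.smul_of_tower_mem _ d ht)
  have : (d : ℚ) * formQ H t (castVec v) = 0 := by
    rw [← formQ_zsmul_left, ht₀, formQ_castVec, bilin_comm hsymm, hv t₀ ht₀S, Int.cast_zero]
  exact (mul_eq_zero.mp this).resolve_left (Int.cast_ne_zero.mpr hd)

end Orthogonal

section Dual

variable {m : ℕ} {H : Matrix (Fin m) (Fin m) ℤ} {S : Submodule ℤ (Fin m → ℤ)}

variable (H S) in
def dualLattice : Set (Fin m → ℚ) :=
  {x | x ∈ ratSpan S ∧ ∀ u ∈ S, ∃ k : ℤ, bilinQ H x (castVec u) = k}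

theorem add_castVec_mem_dualLattice {x : Fin m → ℚ} (hx : x ∈ dualLattice H S)
    {w : Fin m → ℤ} (hw : w ∈ S) : x + castVec w ∈ dualLattice H S := by
  refine ⟨add_mem hx.1 (castVec_mem_ratSpan hw), fun u hu => ?_⟩
  obtain ⟨k, hk⟩ := hx.2 u hu
  refine ⟨k + bilin H w u, ?_⟩
  rw [← formQ_apply, map_add, LinearMap.add_apply, formQ_apply, hk, formQ_castVec, Int.cast_add]

theorem sub_mem_of_isometry_fixing_orthogonal (hsymm : H.IsSymm) (hH : H.det ≠ 0)
    (hprim : ∀ (y : Fin m → ℤ) (k : ℤ), k ≠ 0 → k • y ∈ S → y ∈ S)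
    {ψ : (Fin m → ℤ) →ₗ[ℤ] (Fin m → ℤ)} (hψ : ∀ x y, bilin H (ψ x) (ψ y) = bilin H x y)
    (hfix : ∀ x, (∀ s ∈ S, bilin H x s = 0) → ψ x = x) (l : Fin m → ℤ) : ψ l - l ∈ S := by
  refine mem_of_forall_orthogonal_bilin_eq_zero hsymm hH hprim fun t ht => ?_
  have : bilin H (ψ l) t = bilin H l t := by
    conv_lhs => rw [← hfix t ht]
    exact hψ l t
  rw [bilin, sub_dotProduct, ← bilin, ← bilin, this, sub_self]

theorem exists_sub_eq_castVec_of_isometry (hsymm : H.IsSymm) (huni : IsUnimodular H)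
    (hprim : ∀ (y : Fin m → ℤ) (k : ℤ), k ≠ 0 → k • y ∈ S → y ∈ S)
    {ψ : (Fin m → ℤ) ≃ₗ[ℤ] (Fin m → ℤ)} (hψ : ∀ x y, bilin H (ψ x) (ψ y) = bilin H x y)
    (hfix : ∀ x, (∀ s ∈ S, bilin H x s = 0) → ψ x = x) {x : Fin m → ℚ} {d : ℤ}
    {s : Fin m → ℤ} (hd : d ≠ 0) (hs : s ∈ S) (hdx : d • x = castVec s)
    (hx : x ∈ dualLattice H S) : ∃ w ∈ S, (d : ℚ)⁻¹ • castVec (ψ s) - x = castVec w := by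
  have hψsub := sub_mem_of_isometry_fixing_orthogonal hsymm huni.ne_zero hprim
    (ψ := ψ.toLinearMap) hψ hfix
  have hpair : ∀ l, formQ H ((d : ℚ)⁻¹ • castVec (ψ s) - x) (castVec l)
      = formQ H x (castVec (ψ.symm l - l)) := by
    intro l
    simp only [eq_inv_smul_of_zsmul_eq hd hdx, castVec_sub, map_sub, map_smul,
      LinearMap.sub_apply, LinearMap.smul_apply, formQ_castVec]
    rw [← hψ s (ψ.symm l), ψ.apply_symm_apply]
  obtain ⟨w, hw⟩ := exists_castVec_eq_of_forall_bilinQ_int huni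
    (z := (d : ℚ)⁻¹ • castVec (ψ s) - x) fun l => by
      obtain ⟨k, hk⟩ := hx.2 _ (by simpa using neg_mem (hψsub (ψ.symm l)))
      exact ⟨k, by rw [← formQ_apply, hpair, formQ_apply, hk]⟩
  have hψs : ψ s ∈ S := by simpa using add_mem (hψsub s) hs
  refine ⟨w, mem_of_castVec_mem_ratSpan hprim ?_, hw.symm⟩
  rw [hw]
  exact sub_mem (Submodule.smul_mem _ _ (castVec_mem_ratSpan hψs)) hx.1

end Dual

theorem LinearMap.BilinForm.ofIsCompl_orthogonal_isometry {R V : Type*} [CommRing R]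
    [AddCommGroup V] [Module R V] {B : LinearMap.BilinForm R V} (hB : B.IsRefl)
    {W : Submodule R V} (h : IsCompl W (B.orthogonal W)) {f : W →ₗ[R] W}
    (hf : ∀ a b, B (f a) (f b) = B a b) (x y : V) :
    B (ofIsCompl h (W.subtype ∘ₗ f) (B.orthogonal W).subtype x)
      (ofIsCompl h (W.subtype ∘ₗ f) (B.orthogonal W).subtype y) = B x y := by
  obtain ⟨a, b, ha, hb, rfl⟩ := Submodule.codisjoint_iff_exists_add_eq.mp h.codisjoint x
  obtain ⟨c, e, hc, he, rfl⟩ := Submodule.codisjoint_iff_exists_add_eq.mp h.codisjoint y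
  have key : ∀ a : W, ∀ b ∈ B.orthogonal W, B a b = 0 ∧ B b a = 0 :=
    fun a b hb => ⟨hb a a.2, hB _ _ (hb a a.2)⟩
  lift a to W using ha
  lift c to W using hc
  simp only [map_add, LinearMap.add_apply, ofIsCompl_apply_left,
    ofIsCompl_apply_right (h := h) (v := ⟨b, hb⟩), ofIsCompl_apply_right (h := h) (v := ⟨e, he⟩),
    LinearMap.comp_apply, Submodule.subtype_apply, hf,
    (key (f a) e he).1, (key (f c) b hb).2, (key a e he).1, (key c b hb).2]

section Extension

variable {m : ℕ} {H : Matrix (Fin m) (Fin m) ℤ} {S : Submodule ℤ (Fin m → ℤ)}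

variable (S) in
noncomputable def ratExtension (φ : S →ₗ[ℤ] S) : ratSpan S →ₗ[ℚ] ratSpan S :=
  IsLocalizedModule.mapExtendScalars ℤ⁰ (S.toLocalized' ℚ ℤ⁰ (castL m))
    (S.toLocalized' ℚ ℤ⁰ (castL m)) ℚ φ

theorem ratExtension_apply (φ : S →ₗ[ℤ] S) {x : Fin m → ℚ} (hx : x ∈ ratSpan S) {d : ℤ}
    (hd : d ≠ 0) {s : Fin m → ℤ} (hs : s ∈ S) (hdx : d • x = castVec s) :
    (ratExtension S φ ⟨x, hx⟩ : Fin m → ℚ) = (d : ℚ)⁻¹ • castVec (φ ⟨s, hs⟩ : Fin m → ℤ) := by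
  have hdx' : d • (⟨x, hx⟩ : ratSpan S) = S.toLocalized' ℚ ℤ⁰ (castL m) ⟨s, hs⟩ :=
    Subtype.ext hdx
  have := congrArg (fun y : ratSpan S => (ratExtension S φ y : Fin m → ℚ)) hdx'
  simp only [map_zsmul, Submodule.coe_smul_of_tower, ratExtension,
    IsLocalizedModule.mapExtendScalars_apply_apply, IsLocalizedModule.map_apply,
    Submodule.toLocalized'_apply_coe, castL_apply] at this
  exact eq_inv_smul_of_zsmul_eq hd this

theorem formQ_ratExtension {φ : S →ₗ[ℤ] S}
    (hφ : ∀ x y : S, bilin H (φ x : Fin m → ℤ) (φ y) = bilin H x y) (a b : ratSpan S) :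
    formQ H (ratExtension S φ a) (ratExtension S φ b) = formQ H a b := by
  obtain ⟨x, hx⟩ := a
  obtain ⟨y, hy⟩ := b
  obtain ⟨d, hd, s, hs, hdx⟩ := exists_zsmul_eq_castVec_of_mem_ratSpan hx
  obtain ⟨e, he, t, ht, hey⟩ := exists_zsmul_eq_castVec_of_mem_ratSpan hy
  change formQ H (ratExtension S φ ⟨x, hx⟩) (ratExtension S φ ⟨y, hy⟩) = formQ H x y
  rw [ratExtension_apply φ hx hd hs hdx, ratExtension_apply φ hy he ht hey,
    eq_inv_smul_of_zsmul_eq hd hdx, eq_inv_smul_of_zsmul_eq he hey]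
  simp only [map_smul, LinearMap.smul_apply, formQ_castVec, hφ]

end Extension

section ExtendByIdentity

variable {m : ℕ} {H : Matrix (Fin m) (Fin m) ℤ} {S : Submodule ℤ (Fin m → ℤ)}
  (h : IsCompl (ratSpan S) ((formQ H).orthogonal (ratSpan S))) (φ : S →ₗ[ℤ] S)

noncomputable def extendByIdentity : (Fin m → ℚ) →ₗ[ℚ] (Fin m → ℚ) :=
  LinearMap.ofIsCompl h ((ratSpan S).subtype ∘ₗ ratExtension S φ)
    ((formQ H).orthogonal (ratSpan S)).subtype

theorem extendByIdentity_apply_of_mem_orthogonal {x : Fin m → ℚ}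
    (hx : x ∈ (formQ H).orthogonal (ratSpan S)) : extendByIdentity h φ x = x :=
  LinearMap.ofIsCompl_apply_right h ⟨x, hx⟩

theorem extendByIdentity_castVec (s : S) :
    extendByIdentity h φ (castVec s) = castVec (φ s : Fin m → ℤ) := by
  rw [extendByIdentity, LinearMap.ofIsCompl_apply_left h ⟨_, castVec_mem_ratSpan s.2⟩,
    LinearMap.comp_apply, Submodule.subtype_apply,
    ratExtension_apply φ _ one_ne_zero s.2 (one_smul ℤ _)]
  simp

theorem formQ_extendByIdentity (hsymm : H.IsSymm)
    (hφ : ∀ x y : S, bilin H (φ x : Fin m → ℤ) (φ y) = bilin H x y) (x y : Fin m → ℚ) :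
    formQ H (extendByIdentity h φ x) (extendByIdentity h φ y) = formQ H x y :=
  LinearMap.BilinForm.ofIsCompl_orthogonal_isometry (formQ_isSymm hsymm).isRefl h
    (formQ_ratExtension hφ) x y

theorem exists_extendByIdentity_castVec_eq_castVec (hsymm : H.IsSymm)
    (htriv : ∀ (x : Fin m → ℚ) (d : ℤ) (s : S), d ≠ 0 → d • x = castVec (s : Fin m → ℤ) →
      x ∈ dualLattice H S → ∃ w ∈ S, (d : ℚ)⁻¹ • castVec (φ s : Fin m → ℤ) - x = castVec w)
    (l : Fin m → ℤ) : ∃ v, extendByIdentity h φ (castVec l) = castVec v := by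
  obtain ⟨a, b, ha, hb, hab⟩ := Submodule.codisjoint_iff_exists_add_eq.mp h.codisjoint (castVec l)
  have ha_dual : a ∈ dualLattice H S := by
    refine ⟨ha, fun u hu => ⟨bilin H l u, ?_⟩⟩
    have hbu : formQ H b (castVec u) = 0 :=
      (formQ_isSymm hsymm).isRefl _ _ (hb _ (castVec_mem_ratSpan hu))
    rw [← formQ_apply, ← formQ_castVec, ← hab, map_add, LinearMap.add_apply, hbu, add_zero]
  obtain ⟨d, hd, s, hs, hdx⟩ := exists_zsmul_eq_castVec_of_mem_ratSpan ha
  obtain ⟨w, -, hw⟩ := htriv a d ⟨s, hs⟩ hd hdx ha_dual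
  refine ⟨l + w, ?_⟩
  rw [← hab, map_add, extendByIdentity_apply_of_mem_orthogonal h φ hb, extendByIdentity,
    LinearMap.ofIsCompl_apply_left h ⟨a, ha⟩, LinearMap.comp_apply, Submodule.subtype_apply,
    ratExtension_apply φ ha hd hs hdx, castVec_add, ← hab, sub_eq_iff_eq_add.mp hw]
  abel

end ExtendByIdentity

theorem exists_linearMap_castVec_eq {m : ℕ} (Ψ : (Fin m → ℚ) →ₗ[ℚ] (Fin m → ℚ))
    (hΨ : ∀ l, ∃ v, Ψ (castVec l) = castVec v) :
    ∃ f : (Fin m → ℤ) →ₗ[ℤ] (Fin m → ℤ), ∀ l, castVec (f l) = Ψ (castVec l) := by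
  choose F hF using hΨ
  refine ⟨{ toFun := F, map_add' := ?_, map_smul' := ?_ }, fun l => (hF l).symm⟩
  · intro a b
    apply castVec_injective
    rw [← hF, castVec_add, map_add, hF, hF, castVec_add]
  · intro c a
    apply castVec_injective
    rw [← hF, castVec_zsmul, map_zsmul, hF, RingHom.id_apply, castVec_zsmul]

theorem exists_isometry_extension {m : ℕ} {H : Matrix (Fin m) (Fin m) ℤ}
    {S : Submodule ℤ (Fin m → ℤ)} (hsymm : H.IsSymm) (huni : IsUnimodular H)
    (hndS : ∀ x ∈ S, (∀ y ∈ S, bilin H x y = 0) → x = 0) (φ : S →ₗ[ℤ] S)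
    (hφ : ∀ x y : S, bilin H (φ x : Fin m → ℤ) (φ y) = bilin H x y)
    (htriv : ∀ (x : Fin m → ℚ) (d : ℤ) (s : S), d ≠ 0 → d • x = castVec (s : Fin m → ℤ) →
      x ∈ dualLattice H S → ∃ w ∈ S, (d : ℚ)⁻¹ • castVec (φ s : Fin m → ℤ) - x = castVec w) :
    ∃ ψ : (Fin m → ℤ) ≃ₗ[ℤ] (Fin m → ℤ),
      (∀ x y, bilin H (ψ x) (ψ y) = bilin H x y) ∧
      (∀ s : S, ψ s = φ s) ∧
      (∀ x, (∀ s ∈ S, bilin H x s = 0) → ψ x = x) := by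
  have h := isCompl_ratSpan_orthogonal hsymm hndS
  obtain ⟨f, hf⟩ := exists_linearMap_castVec_eq _
    (exists_extendByIdentity_castVec_eq_castVec h φ hsymm htriv)
  have hiso : ∀ x y, bilin H (f x) (f y) = bilin H x y := fun x y => by
    have := formQ_extendByIdentity h φ hsymm hφ (castVec x) (castVec y)
    rwa [← hf, ← hf, formQ_castVec, formQ_castVec, Int.cast_inj] at this
  have hdet :
      IsUnit (LinearMap.toMatrix (Pi.basisFun ℤ (Fin m)) (Pi.basisFun ℤ (Fin m)) f).det := by
    rw [LinearMap.toMatrix_eq_toMatrix']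
    exact isUnit_det_of_isometry huni.ne_zero hiso
  refine ⟨LinearEquiv.ofIsUnitDet hdet, hiso, fun s => castVec_injective ?_,
    fun x hx => castVec_injective ?_⟩
  · rw [LinearEquiv.ofIsUnitDet_apply, hf, extendByIdentity_castVec]
  · rw [LinearEquiv.ofIsUnitDet_apply, hf, extendByIdentity_apply_of_mem_orthogonal h φ
      ((castVec_mem_orthogonal_iff hsymm).mpr hx)]

theorem statement13_general {m : ℕ} (H : Matrix (Fin m) (Fin m) ℤ)
    (hsymm : H.IsSymm) (huni : IsUnimodular H)
    (S : Submodule ℤ (Fin m → ℤ))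
    (hprim : ∀ (y : Fin m → ℤ) (k : ℤ), k ≠ 0 → k • y ∈ S → y ∈ S)
    (hndS : ∀ x ∈ S, (∀ y ∈ S, bilin H x y = 0) → x = 0)
    (φ : S ≃ₗ[ℤ] S)
    (hφ : ∀ x y : S, bilin H (φ x : Fin m → ℤ) (φ y : Fin m → ℤ)
        = bilin H (x : Fin m → ℤ) (y : Fin m → ℤ)) :
    (∃ ψ : (Fin m → ℤ) ≃ₗ[ℤ] (Fin m → ℤ),
        (∀ x y : Fin m → ℤ, bilin H (ψ x) (ψ y) = bilin H x y) ∧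
        (∀ s : S, ψ (s : Fin m → ℤ) = (φ s : Fin m → ℤ)) ∧
        (∀ x : Fin m → ℤ, (∀ s ∈ S, bilin H x s = 0) → ψ x = x)) ↔
    (∀ (x : Fin m → ℚ) (d : ℤ) (s : S), d ≠ 0 → d • x = castVec (s : Fin m → ℤ) →
      (x ∈ Submodule.span ℚ (castVec '' (S : Set (Fin m → ℤ))) ∧
        ∀ u ∈ S, ∃ k : ℤ, bilinQ H x (castVec u) = (k : ℚ)) →
      (((d : ℚ)⁻¹ • castVec (φ s : Fin m → ℤ)
          ∈ Submodule.span ℚ (castVec '' (S : Set (Fin m → ℤ))) ∧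
        ∀ u ∈ S, ∃ k : ℤ,
          bilinQ H ((d : ℚ)⁻¹ • castVec (φ s : Fin m → ℤ)) (castVec u) = (k : ℚ)) ∧
      ∃ w : S, (d : ℚ)⁻¹ • castVec (φ s : Fin m → ℤ) - x = castVec (w : Fin m → ℤ))) := by
  rw [← ratSpan_eq_span]
  constructor
  · rintro ⟨ψ, hψ, hext, hfix⟩ x d s hd hdx hx
    obtain ⟨w, hw, hxw⟩ :=
      exists_sub_eq_castVec_of_isometry hsymm huni hprim hψ hfix hd s.2 hdx hx
    rw [hext] at hxw
    refine ⟨?_, ⟨w, hw⟩, hxw⟩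
    rw [sub_eq_iff_eq_add'.mp hxw]
    exact add_castVec_mem_dualLattice hx hw
  · intro htriv
    exact exists_isometry_extension hsymm huni hndS φ.toLinearMap hφ fun x d s hd hdx hx =>
      let ⟨_, w, hw⟩ := htriv x d s hd hdx hx
      ⟨w, w.2, hw⟩

/-- Let `L` be an even unimodular lattice, `S ⊆ L` a primitive
nondegenerate sublattice and `S^⊥` its orthogonal complement.  An isometry `φ` of `S`
extends to an isometry of `L` restricting to the identity on `S^⊥` if and only if `φ`
induces the identity on the discriminant group `A_S = S*/S`. -/
theorem statement13 {m : ℕ} (H : Matrix (Fin m) (Fin m) ℤ)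
    (hsymm : H.IsSymm) (heven : IsEvenLattice H) (huni : IsUnimodular H)
    (S : Submodule ℤ (Fin m → ℤ))
    (hprim : ∀ (y : Fin m → ℤ) (k : ℤ), k ≠ 0 → k • y ∈ S → y ∈ S)
    (hndS : ∀ x ∈ S, (∀ y ∈ S, bilin H x y = 0) → x = 0)
    (φ : S ≃ₗ[ℤ] S)
    (hφ : ∀ x y : S, bilin H (φ x : Fin m → ℤ) (φ y : Fin m → ℤ)
        = bilin H (x : Fin m → ℤ) (y : Fin m → ℤ)) :
    (∃ ψ : (Fin m → ℤ) ≃ₗ[ℤ] (Fin m → ℤ),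
        (∀ x y : Fin m → ℤ, bilin H (ψ x) (ψ y) = bilin H x y) ∧
        (∀ s : S, ψ (s : Fin m → ℤ) = (φ s : Fin m → ℤ)) ∧
        (∀ x : Fin m → ℤ, (∀ s ∈ S, bilin H x s = 0) → ψ x = x)) ↔
    (∀ (x : Fin m → ℚ) (d : ℤ) (s : S), d ≠ 0 → d • x = castVec (s : Fin m → ℤ) →
      (x ∈ Submodule.span ℚ (castVec '' (S : Set (Fin m → ℤ))) ∧
        ∀ u ∈ S, ∃ k : ℤ, bilinQ H x (castVec u) = (k : ℚ)) →
      (((d : ℚ)⁻¹ • castVec (φ s : Fin m → ℤ)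
          ∈ Submodule.span ℚ (castVec '' (S : Set (Fin m → ℤ))) ∧
        ∀ u ∈ S, ∃ k : ℤ,
          bilinQ H ((d : ℚ)⁻¹ • castVec (φ s : Fin m → ℤ)) (castVec u) = (k : ℚ)) ∧
      ∃ w : S, (d : ℚ)⁻¹ • castVec (φ s : Fin m → ℤ) - x = castVec (w : Fin m → ℤ))) :=
  statement13_general H hsymm huni S hprim hndS φ hφ
end

section
/- Let L = E₈ ⊕ E₈ ⊕ E₈ be the orthogonal direct sum of three copies of the lattice E₈, and let ρ be the isometry cyclically permuting the three summands, ρ(x, y, z) = (z, x, y). Then the coinvariant sublattice L_ρ = (L^ρ)^⊥ equals {(x, y, z) ∈ L : x + y + z = 0}; it has rank 16, its discriminant group A_{L_ρ} is isomorphic to (ℤ/3ℤ)⁸ (so l(A_{L_ρ}) = 8), and consequently L_ρ admits no primitive embedding into any even unimodular lattice of signature (3, 19). -/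
/-!
STATEMENT 17 (the coinvariant lattice of the cyclic permutation of `E₈ ⊕ E₈ ⊕ E₈`).

`E₈` is the rank-8 negative definite even unimodular lattice, given by the Gram matrix
`E8gram` = −(Cartan matrix of `E₈`) in a basis of simple roots (Bourbaki numbering:
the chain 1−3−4−5−6−7−8 with node 2 attached to node 4).  The lattice
`L = E₈ ⊕ E₈ ⊕ E₈` is `Fin 3 → (Fin 8 → ℤ)` with the orthogonal sum form `bT`, and
`ρ(x, y, z) = (z, x, y)` is the cyclic shift.

General lattices are formalized by Gram matrices `H : Matrix (Fin m) (Fin m) ℤ` with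
bilinear form `bilin H x y = x ⬝ᵥ H.mulVec y`.  For a nondegenerate lattice `S`, the
map `x ↦ B(x,·)` identifies the dual lattice `S* ⊆ S ⊗ ℚ` with `Hom(S, ℤ)` and carries
`S ⊆ S*` onto the range of the form; accordingly the discriminant group `A_S = S*/S`
is formalized as the cokernel of the form, and `l(A_S)` as its minimal number of
generators.
-/

open Matrix

/-- The Gram matrix of the negative definite `E₈` lattice (minus the `E₈` Cartan
matrix). -/
def E8gram : Matrix (Fin 8) (Fin 8) ℤ :=
  !![-2,  0,  1,  0,  0,  0,  0,  0;
      0, -2,  0,  1,  0,  0,  0,  0;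
      1,  0, -2,  1,  0,  0,  0,  0;
      0,  1,  1, -2,  1,  0,  0,  0;
      0,  0,  0,  1, -2,  1,  0,  0;
      0,  0,  0,  0,  1, -2,  1,  0;
      0,  0,  0,  0,  0,  1, -2,  1;
      0,  0,  0,  0,  0,  0,  1, -2]

/-- The bilinear form of the orthogonal direct sum `L = E₈ ⊕ E₈ ⊕ E₈` on
`Fin 3 → (Fin 8 → ℤ)`. -/
def bT (u v : Fin 3 → Fin 8 → ℤ) : ℤ :=
  ∑ i : Fin 3, (u i) ⬝ᵥ E8gram.mulVec (v i)

/-- The isometry `ρ` of `L` cyclically permuting the three summands: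
`ρ(x, y, z) = (z, x, y)`. -/
def ρcyc (v : Fin 3 → Fin 8 → ℤ) : Fin 3 → Fin 8 → ℤ :=
  fun i => v (i + 2)

/-- The coinvariant sublattice `L_ρ = (L^ρ)^⊥`, the orthogonal complement of the fixed
sublattice `L^ρ = {v : ρ v = v}`. -/
def coinvRho : Submodule ℤ (Fin 3 → Fin 8 → ℤ) where
  carrier := {u | ∀ v, ρcyc v = v → bT u v = 0}
  add_mem' := by
    intro a b ha hb v hv
    have h1 := ha v hv
    have h2 := hb v hv
    simp only [bT, Pi.add_apply, add_dotProduct, Finset.sum_add_distrib] at *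
    omega
  zero_mem' := by
    intro v hv
    simp [bT]
  smul_mem' := by
    intro c x hx v hv
    have h := hx v hv
    simp only [bT, Pi.smul_apply, smul_dotProduct, smul_eq_mul] at *
    rw [← Finset.mul_sum, h, mul_zero]

/-- The bilinear form of `L` restricted to the coinvariant sublattice `L_ρ`, as a
linear map into the dual module. -/
def coinvRhoForm : coinvRho →ₗ[ℤ] coinvRho →ₗ[ℤ] ℤ :=
  LinearMap.mk₂ ℤ (fun x y : coinvRho => bT (x : Fin 3 → Fin 8 → ℤ) (y : Fin 3 → Fin 8 → ℤ))
    (fun x₁ x₂ y => by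
      simp only [bT, Submodule.coe_add, Pi.add_apply, add_dotProduct,
        Finset.sum_add_distrib])
    (fun c x y => by
      simp only [bT, Submodule.coe_smul, Pi.smul_apply, smul_dotProduct, smul_eq_mul,
        Finset.mul_sum])
    (fun x y₁ y₂ => by
      simp only [bT, Submodule.coe_add, Pi.add_apply, mulVec_add, dotProduct_add,
        Finset.sum_add_distrib])
    (fun c x y => by
      simp only [bT, Submodule.coe_smul, Pi.smul_apply, mulVec_smul, dotProduct_smul,
        smul_eq_mul, Finset.mul_sum])

/-- The discriminant group `A_{L_ρ} = (L_ρ)*/L_ρ`, realized as the cokernel of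
`x ↦ B(x,·)` on `L_ρ`. -/
abbrev DiscRho : Type :=
  (coinvRho →ₗ[ℤ] ℤ) ⧸ LinearMap.range coinvRhoForm

/-- `l(A)`: the minimal number of generators of an abelian group `A`. -/
noncomputable def minGens (A : Type) [AddCommGroup A] : ℕ :=
  sInf {k : ℕ | ∃ f : Fin k → A, AddSubgroup.closure (Set.range f) = ⊤}

/-- The real extension of the bilinear form of `H`, on `(Fin m → ℝ)`. -/
def bilinR {m : ℕ} (H : Matrix (Fin m) (Fin m) ℤ) (x y : Fin m → ℝ) : ℝ :=
  x ⬝ᵥ (H.map (Int.cast : ℤ → ℝ)).mulVec y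

/-- The lattice with Gram matrix `H` has signature `(p, q)`. -/
def HasSignature {m : ℕ} (H : Matrix (Fin m) (Fin m) ℤ) (p q : ℕ) : Prop :=
  p + q = m ∧
  ∃ v : Fin p ⊕ Fin q → (Fin m → ℝ),
    LinearIndependent ℝ v ∧
    (Pairwise fun i j => bilinR H (v i) (v j) = 0) ∧
    (∀ i : Fin p, 0 < bilinR H (v (Sum.inl i)) (v (Sum.inl i))) ∧
    (∀ j : Fin q, bilinR H (v (Sum.inr j)) (v (Sum.inr j)) < 0)

/-!
Writing `u ∈ L_ρ` as `(x, y, -x - y)` identifies `L_ρ` with `ℤ¹⁶`, with Gram matrix `A₂ ⊗ E₈`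
for `A₂ = [[2, 1], [1, 2]]`. As `E₈` is unimodular and `A₂` has Smith normal form `diag(1, 3)`,
the discriminant group is the cokernel of `diag(1, 3) ⊗ 1`, i.e. `(ℤ/3)⁸`, which needs 8
generators. A primitive sublattice `S` of a unimodular lattice `N` is a direct summand and
`N ≅ N*`, so `n ↦ B(n, ·)|_S` maps `N` onto `S*`; hence `A_S` is a quotient of
`N / S ≅ ℤ^(rk N - rk S)`. For `rk N = 3 + 19` this would give `8 ≤ 22 - 16`.
-/

open scoped Kronecker

section MinGens

variable {A B : Type} [AddCommGroup A] [AddCommGroup B]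

lemma closure_range_comp_eq_top {k : ℕ} {g : Fin k → A}
    (hg : AddSubgroup.closure (Set.range g) = ⊤) (φ : A →+ B) (hφ : Function.Surjective φ) :
    AddSubgroup.closure (Set.range (φ ∘ g)) = ⊤ := by
  rw [Set.range_comp, ← AddMonoidHom.map_closure, hg, AddSubgroup.map_top_of_surjective φ hφ]

lemma minGens_congr (e : A ≃+ B) : minGens A = minGens B :=
  congrArg sInf <| Set.ext fun _ =>
    ⟨fun ⟨g, hg⟩ => ⟨e ∘ g, closure_range_comp_eq_top hg e.toAddMonoidHom e.surjective⟩,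
      fun ⟨g, hg⟩ =>
        ⟨e.symm ∘ g, closure_range_comp_eq_top hg e.symm.toAddMonoidHom e.symm.surjective⟩⟩

lemma exists_closure_eq_top_of_surjective [Module.Free ℤ A] [Module.Finite ℤ A] (φ : A →+ B)
    (hφ : Function.Surjective φ) :
    ∃ g : Fin (Module.finrank ℤ A) → B, AddSubgroup.closure (Set.range g) = ⊤ := by
  let b := Module.finBasis ℤ A
  refine ⟨φ ∘ b, closure_range_comp_eq_top ?_ φ hφ⟩
  rw [← AddSubgroup.toIntSubmodule.injective.eq_iff, AddSubgroup.toIntSubmodule_closure, b.span_eq]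
  rfl

lemma minGens_le_finrank_of_surjective [Module.Free ℤ A] [Module.Finite ℤ A] (φ : A →+ B)
    (hφ : Function.Surjective φ) : minGens B ≤ Module.finrank ℤ A :=
  Nat.sInf_le (exists_closure_eq_top_of_surjective φ hφ)

lemma minGens_pi_zmod (n p : ℕ) [Fact (1 < p)] : minGens (Fin n → ZMod p) = n := by
  let φ : (Fin n → ℤ) →+ (Fin n → ZMod p) := AddMonoidHom.compLeft (Int.castAddHom (ZMod p)) _
  have hφ : Function.Surjective φ := fun x => ⟨fun i => (x i).valMinAbs, by ext; simp [φ]⟩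
  refine le_antisymm ((minGens_le_finrank_of_surjective φ hφ).trans_eq (by simp))
    (le_csInf ⟨_, exists_closure_eq_top_of_surjective φ hφ⟩ ?_)
  rintro k ⟨g, hg⟩
  have hspan : Submodule.span (ZMod p) (Set.range g) = ⊤ := by
    rw [eq_top_iff, ← Submodule.toAddSubgroup_le, Submodule.top_toAddSubgroup, ← hg]
    exact AddSubgroup.closure_le _ |>.mpr Submodule.subset_span
  simpa using finrank_le_of_span_eq_top hspan

end MinGens

noncomputable def quotRangeEquivOfGram {R ι M : Type*} [CommRing R] [Fintype ι] [DecidableEq ι]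
    [AddCommGroup M] [Module R M] (e : (ι → R) ≃ₗ[R] M) (B : M →ₗ[R] M →ₗ[R] R)
    (G : Matrix ι ι R) (hG : ∀ c c', B (e c) (e c') = c ⬝ᵥ G *ᵥ c') :
    ((M →ₗ[R] R) ⧸ LinearMap.range B) ≃ₗ[R] ((ι → R) ⧸ LinearMap.range Gᵀ.mulVecLin) :=
  let coords : (M →ₗ[R] R) ≃ₗ[R] (ι → R) := e.dualMap.trans (Module.piEquiv ι R R).symm
  have hcoords : (coords.toLinearMap ∘ₗ B) ∘ₗ e.toLinearMap = Gᵀ.mulVecLin := by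
    refine LinearMap.ext fun c => ?_
    change (Module.piEquiv ι R R).symm (e.dualMap (B (e c))) = Gᵀ *ᵥ c
    refine (LinearEquiv.symm_apply_eq _).mpr (LinearMap.ext fun w => ?_)
    rw [LinearEquiv.dualMap_apply, hG, Module.piEquiv_apply_apply, mulVec_transpose,
      dotProduct_mulVec, dotProduct_comm]
    simp only [smul_eq_mul]
    rfl
  Submodule.Quotient.equiv _ _ coords <| by
    rw [← LinearMap.range_comp, ← hcoords, LinearMap.range_comp_of_range_eq_top _ e.range]

def quotRangeMulVecLinEquivOfMul {R n : Type*} [CommRing R] [Fintype n] [DecidableEq n]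
    {M P Q D : Matrix n n R} [Invertible P] [Invertible Q] (h : P * M * Q = D) :
    ((n → R) ⧸ LinearMap.range M.mulVecLin) ≃ₗ[R] ((n → R) ⧸ LinearMap.range D.mulVecLin) :=
  have hQ : LinearMap.range Q.mulVecLin = ⊤ :=
    LinearMap.range_eq_top.mpr (Q.toLinearEquiv' inferInstance).surjective
  Submodule.Quotient.equiv _ _ (P.toLinearEquiv' inferInstance) <| by
    rw [← LinearMap.range_comp, ← h, Matrix.mulVecLin_mul, Matrix.mulVecLin_mul,
      LinearMap.range_comp_of_range_eq_top _ hQ]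
    rfl

lemma eq_zero_of_forall_dotProduct_mulVec_eq_zero {R ι : Type*} [CommRing R] [Fintype ι]
    [DecidableEq ι] {G : Matrix ι ι R} [Invertible G] {x : ι → R}
    (h : ∀ w, x ⬝ᵥ G *ᵥ w = 0) : x = 0 := by
  funext i
  simpa only [mulVec_mulVec, mul_invOf_self, one_mulVec, dotProduct_single, mul_one,
    Pi.zero_apply] using h (⅟G *ᵥ Pi.single i 1)

lemma dotProduct_kronecker_mulVec {R ι κ : Type*} [CommRing R] [Fintype ι] [Fintype κ]
    (A : Matrix ι ι R) (G : Matrix κ κ R) (c c' : ι × κ → R) :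
    c ⬝ᵥ (A ⊗ₖ G) *ᵥ c' =
      ∑ a, ∑ b, A a b * (c.curry a ⬝ᵥ G *ᵥ c'.curry b) := by
  simp only [dotProduct, mulVec, Fintype.sum_prod_type, kronecker_apply, Finset.mul_sum,
    Function.curry_apply]
  refine Finset.sum_congr rfl fun a _ => ?_
  rw [Finset.sum_comm]
  refine Finset.sum_congr rfl fun b _ => Finset.sum_congr rfl fun j _ =>
    Finset.sum_congr rfl fun k _ => by ring

instance Matrix.invertibleKronecker {R m n : Type*} [CommRing R] [Fintype m] [Fintype n]
    [DecidableEq m] [DecidableEq n] (A : Matrix m m R) (B : Matrix n n R) [Invertible A]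
    [Invertible B] : Invertible (A ⊗ₖ B) where
  invOf := ⅟A ⊗ₖ ⅟B
  invOf_mul_self := by rw [← mul_kronecker_mul, invOf_mul_self, invOf_mul_self, one_kronecker_one]
  mul_invOf_self := by rw [← mul_kronecker_mul, mul_invOf_self, mul_invOf_self, one_kronecker_one]

lemma diagonal_kronecker_one_mulVec {R ι κ : Type*} [CommRing R] [Fintype ι] [Fintype κ]
    [DecidableEq ι] [DecidableEq κ] (d : ι → R) (c : ι × κ → R) :
    (diagonal d ⊗ₖ (1 : Matrix κ κ R)) *ᵥ c = fun p => d p.1 * c p := by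
  rw [← diagonal_one, diagonal_kronecker_diagonal]
  ext p
  simp [mulVec_diagonal]

def castSecondRow (κ : Type*) (p : ℕ) : (Fin 2 × κ → ℤ) →ₗ[ℤ] (κ → ZMod p) where
  toFun c j := c (1, j)
  map_add' c c' := by ext; simp
  map_smul' k c := by ext; simp

lemma ker_castSecondRow {κ : Type*} [Fintype κ] [DecidableEq κ] (p : ℕ) :
    LinearMap.ker (castSecondRow κ p) =
      LinearMap.range (diagonal ![1, (p : ℤ)] ⊗ₖ (1 : Matrix κ κ ℤ)).mulVecLin := by
  ext c
  simp only [LinearMap.mem_ker, LinearMap.mem_range, mulVecLin_apply,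
    diagonal_kronecker_one_mulVec]
  constructor
  · intro hc
    have hdvd (j : κ) : (p : ℤ) ∣ c (1, j) :=
      (ZMod.intCast_zmod_eq_zero_iff_dvd _ p).mp (congrFun hc j)
    refine ⟨fun q => if q.1 = 0 then c q else c q / p, funext fun ⟨a, j⟩ => ?_⟩
    fin_cases a
    · simp
    · simp [Int.mul_ediv_cancel' (hdvd j)]
  · rintro ⟨c', rfl⟩
    ext j
    simp [castSecondRow]

noncomputable def quotRangeDiagonalEquiv (κ : Type*) [Fintype κ] [DecidableEq κ] (p : ℕ) :
    ((Fin 2 × κ → ℤ) ⧸ LinearMap.range (diagonal ![1, (p : ℤ)] ⊗ₖ (1 : Matrix κ κ ℤ)).mulVecLin)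
      ≃ₗ[ℤ] (κ → ZMod p) :=
  (Submodule.quotEquivOfEq _ _ (ker_castSecondRow p).symm).trans
    ((castSecondRow κ p).quotKerEquivOfSurjective fun x =>
      ⟨fun q => (x q.2).valMinAbs, by ext; simp [castSecondRow]⟩)

lemma Submodule.exists_extend_of_projective_quotient {R N : Type*} [Ring R] [AddCommGroup N]
    [Module R N] (S : Submodule R N) [Module.Projective R (N ⧸ S)] (ξ : S →ₗ[R] R) :
    ∃ η : N →ₗ[R] R, η ∘ₗ S.subtype = ξ := by
  obtain ⟨s, hs⟩ := Module.projective_lifting_property S.mkQ LinearMap.id S.mkQ_surjective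
  have hmem (n : N) : n - s (S.mkQ n) ∈ S := by
    rw [← Submodule.Quotient.mk_eq_zero, Submodule.Quotient.mk_sub, ← Submodule.mkQ_apply,
      ← Submodule.mkQ_apply, ← LinearMap.comp_apply S.mkQ s, hs, LinearMap.id_apply, sub_self]
  let retraction : N →ₗ[R] S := (LinearMap.id - s ∘ₗ S.mkQ).codRestrict S hmem
  have hretraction (x : S) : retraction x = x := by
    have hx : S.mkQ x = 0 := (Submodule.Quotient.mk_eq_zero S).mpr x.2
    ext
    simp [retraction, hx]
  exact ⟨ξ ∘ₗ retraction, LinearMap.ext fun x => congrArg ξ (hretraction x)⟩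

lemma exists_bilin_eq_of_isUnit_det {m : ℕ} {H : Matrix (Fin m) (Fin m) ℤ} (hH : IsUnit H.det)
    (η : (Fin m → ℤ) →ₗ[ℤ] ℤ) : ∃ n, ∀ v, bilin H n v = η v := by
  have := H.invertibleOfIsUnitDet hH
  refine ⟨(Module.piEquiv (Fin m) ℤ ℤ).symm η ᵥ* ⅟H, fun v => ?_⟩
  rw [bilin, dotProduct_mulVec, vecMul_vecMul, invOf_mul_self, vecMul_one, dotProduct_comm]
  conv_rhs => rw [← (Module.piEquiv (Fin m) ℤ ℤ).apply_symm_apply η, Module.piEquiv_apply_apply]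
  rfl

lemma isTorsionFree_quotient_range {m : ℕ} {M : Type*} [AddCommGroup M] (f : M →ₗ[ℤ] (Fin m → ℤ))
    (hprim : ∀ (y : Fin m → ℤ) (k : ℤ), k ≠ 0 → k • y ∈ LinearMap.range f → y ∈ LinearMap.range f) :
    Module.IsTorsionFree ℤ ((Fin m → ℤ) ⧸ LinearMap.range f) := by
  refine .of_smul_eq_zero fun k q hkq => or_iff_not_imp_left.mpr fun hk => ?_
  obtain ⟨y, rfl⟩ := Submodule.mkQ_surjective _ q
  rw [← map_smul, Submodule.mkQ_apply, Submodule.Quotient.mk_eq_zero] at hkq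
  exact (Submodule.Quotient.mk_eq_zero _).mpr (hprim y k hk hkq)

lemma exists_bilin_comp_eq_of_primitive {m : ℕ} {M : Type*} [AddCommGroup M]
    {H : Matrix (Fin m) (Fin m) ℤ} (hH : IsUnit H.det) (f : M →ₗ[ℤ] (Fin m → ℤ))
    (hf : Function.Injective f)
    (hprim : ∀ (y : Fin m → ℤ) (k : ℤ), k ≠ 0 → k • y ∈ LinearMap.range f → y ∈ LinearMap.range f)
    (ξ : M →ₗ[ℤ] ℤ) : ∃ n, ∀ x, bilin H n (f x) = ξ x := by
  have := isTorsionFree_quotient_range f hprim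
  let e := LinearEquiv.ofInjective f hf
  obtain ⟨η, hη⟩ := (LinearMap.range f).exists_extend_of_projective_quotient
    (ξ ∘ₗ e.symm.toLinearMap)
  obtain ⟨n, hn⟩ := exists_bilin_eq_of_isUnit_det hH η
  refine ⟨n, fun x => ?_⟩
  have hx : e.symm ⟨f x, x, rfl⟩ = x := e.symm_apply_apply x
  simpa [hn, hx] using LinearMap.congr_fun hη ⟨f x, x, rfl⟩

theorem minGens_add_finrank_le_of_primitive_embedding {M : Type} [AddCommGroup M]
    (B : M →ₗ[ℤ] M →ₗ[ℤ] ℤ) {m : ℕ} {H : Matrix (Fin m) (Fin m) ℤ} (hH : IsUnit H.det)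
    (f : M →ₗ[ℤ] (Fin m → ℤ)) (hf : Function.Injective f)
    (hB : ∀ x y, bilin H (f x) (f y) = B x y)
    (hprim : ∀ (y : Fin m → ℤ) (k : ℤ), k ≠ 0 → k • y ∈ LinearMap.range f → y ∈ LinearMap.range f) :
    minGens ((M →ₗ[ℤ] ℤ) ⧸ LinearMap.range B) + Module.finrank ℤ M ≤ m := by
  have := isTorsionFree_quotient_range f hprim
  let π : (Fin m → ℤ) →ₗ[ℤ] M →ₗ[ℤ] ℤ := (Matrix.toLinearMap₂' ℤ H).compl₂ f
  have hπ (n : Fin m → ℤ) (x : M) : π n x = bilin H n (f x) := by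
    simp [π, bilin, Matrix.toLinearMap₂'_apply']
  have hπ_surjective : Function.Surjective π := fun ξ =>
    (exists_bilin_comp_eq_of_primitive hH f hf hprim ξ).imp fun n hn =>
      LinearMap.ext fun x => (hπ n x).trans (hn x)
  let ψ := (LinearMap.range B).mkQ ∘ₗ π
  have hfψ : LinearMap.range f ≤ LinearMap.ker ψ := by
    rintro _ ⟨x, rfl⟩
    have : π (f x) = B x := LinearMap.ext fun y => (hπ _ _).trans (hB x y)
    simp [ψ, this]
  have hψbar : Function.Surjective ((LinearMap.range f).liftQ ψ hfψ) := by
    rw [← LinearMap.range_eq_top, Submodule.range_liftQ, LinearMap.range_eq_top]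
    exact (Submodule.mkQ_surjective _).comp hπ_surjective
  have hgens := minGens_le_finrank_of_surjective ((LinearMap.range f).liftQ ψ hfψ).toAddMonoidHom
    hψbar
  have hrank := (LinearMap.range f).finrank_quotient_add_finrank
  rw [← (LinearEquiv.ofInjective f hf).finrank_eq, Module.finrank_fin_fun] at hrank
  omega

def E8gramInv : Matrix (Fin 8) (Fin 8) ℤ :=
  !![-4, -5, -7, -10, -8, -6, -4, -2;
     -5, -8, -10, -15, -12, -9, -6, -3;
     -7, -10, -14, -20, -16, -12, -8, -4;
     -10, -15, -20, -30, -24, -18, -12, -6;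
     -8, -12, -16, -24, -20, -15, -10, -5;
     -6, -9, -12, -18, -15, -12, -8, -4;
     -4, -6, -8, -12, -10, -8, -6, -3;
     -2, -3, -4, -6, -5, -4, -3, -2]

lemma E8gramInv_mul : E8gramInv * E8gram = 1 := by decide

instance : Invertible E8gram := invertibleOfLeftInverse _ _ E8gramInv_mul

lemma E8gram_isSymm : E8gram.IsSymm := by decide

lemma eq_const_of_ρcyc_eq {v : Fin 3 → Fin 8 → ℤ} (hv : ρcyc v = v) : v = fun _ => v 0 := by
  have h0 : v 2 = v 0 := congrFun hv 0
  have h1 : v 0 = v 1 := congrFun hv 1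
  funext i
  fin_cases i <;> simp [h0, ← h1]

lemma bT_const (u : Fin 3 → Fin 8 → ℤ) (w : Fin 8 → ℤ) :
    bT u (fun _ => w) = (u 0 + u 1 + u 2) ⬝ᵥ E8gram *ᵥ w := by
  simp [bT, Fin.sum_univ_three, add_dotProduct]

theorem mem_coinvRho_iff (u : Fin 3 → Fin 8 → ℤ) : u ∈ coinvRho ↔ u 0 + u 1 + u 2 = 0 := by
  refine ⟨fun hu => eq_zero_of_forall_dotProduct_mulVec_eq_zero (G := E8gram) fun w => ?_,
    fun hu v hv => ?_⟩
  · rw [← bT_const]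
    exact hu _ rfl
  · rw [eq_const_of_ρcyc_eq hv, bT_const, hu, zero_dotProduct]

theorem coe_coinvRho : (coinvRho : Set (Fin 3 → Fin 8 → ℤ)) = {u | u 0 + u 1 + u 2 = 0} :=
  Set.ext mem_coinvRho_iff

def coinvRhoEquiv : (Fin 2 × Fin 8 → ℤ) ≃ₗ[ℤ] coinvRho where
  toFun c := ⟨![c.curry 0, c.curry 1, -c.curry 0 - c.curry 1], by
    rw [mem_coinvRho_iff]; simp⟩
  map_add' c c' := by
    ext i j
    fin_cases i
    · rfl
    · rfl
    · show -(c (0, j) + c' (0, j)) - (c (1, j) + c' (1, j))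
        = (-c (0, j) - c (1, j)) + (-c' (0, j) - c' (1, j))
      ring
  map_smul' k c := by
    ext i j
    fin_cases i
    · rfl
    · rfl
    · show -(k * c (0, j)) - k * c (1, j) = k * (-c (0, j) - c (1, j))
      ring
  invFun u p := (u : Fin 3 → Fin 8 → ℤ) p.1.castSucc p.2
  left_inv c := by ext ⟨i, j⟩; fin_cases i <;> rfl
  right_inv u := by
    have hu (j : Fin 8) : u.1 0 j + u.1 1 j + u.1 2 j = 0 :=
      congrFun ((mem_coinvRho_iff u).mp u.2) j
    ext i j
    fin_cases i
    · rfl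
    · rfl
    · show -u.1 0 j - u.1 1 j = u.1 2 j
      linear_combination -hu j

theorem finrank_coinvRho : Module.finrank ℤ coinvRho = 16 := by
  simp [← coinvRhoEquiv.finrank_eq]

def A2gram : Matrix (Fin 2) (Fin 2) ℤ := !![2, 1; 1, 2]

lemma coinvRhoForm_coinvRhoEquiv (c c' : Fin 2 × Fin 8 → ℤ) :
    coinvRhoForm (coinvRhoEquiv c) (coinvRhoEquiv c') = c ⬝ᵥ (A2gram ⊗ₖ E8gram) *ᵥ c' := by
  change bT ![c.curry 0, c.curry 1, _] ![c'.curry 0, c'.curry 1, _] = _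
  simp only [bT, dotProduct_kronecker_mulVec, Fin.sum_univ_three, Fin.sum_univ_two, A2gram,
    of_apply, cons_val', cons_val_zero, cons_val_one, cons_val, cons_val_fin_one, mulVec_sub,
    mulVec_neg, dotProduct_sub, dotProduct_neg, sub_dotProduct, neg_dotProduct]
  ring

attribute [local instance] invertibleOne

def smithLeft : Matrix (Fin 2) (Fin 2) ℤ := !![0, 1; -1, 2]

def smithRight : Matrix (Fin 2) (Fin 2) ℤ := !![1, -2; 0, 1]

instance : Invertible smithLeft := invertibleOfLeftInverse _ !![2, -1; 1, 0] (by decide)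

instance : Invertible smithRight := invertibleOfLeftInverse _ !![1, 2; 0, 1] (by decide)

lemma smithLeft_mul_A2gram_mul_smithRight :
    smithLeft * A2gram * smithRight = diagonal ![1, 3] := by decide

lemma smith_A2gram_kronecker_E8gram :
    (smithLeft ⊗ₖ ⅟E8gram) * (A2gram ⊗ₖ E8gram) * (smithRight ⊗ₖ 1) = diagonal ![1, 3] ⊗ₖ 1 := by
  rw [← mul_kronecker_mul, ← mul_kronecker_mul, smithLeft_mul_A2gram_mul_smithRight,
    invOf_mul_self, mul_one]

lemma transpose_A2gram_kronecker_E8gram : (A2gram ⊗ₖ E8gram)ᵀ = A2gram ⊗ₖ E8gram := by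
  rw [← kroneckerMap_transpose, E8gram_isSymm.eq, show A2gramᵀ = A2gram by decide]

noncomputable def discRhoEquiv : DiscRho ≃ₗ[ℤ] (Fin 8 → ZMod 3) :=
  (quotRangeEquivOfGram coinvRhoEquiv coinvRhoForm _ coinvRhoForm_coinvRhoEquiv).trans <|
    (Submodule.quotEquivOfEq _ _ (by rw [transpose_A2gram_kronecker_E8gram])).trans <|
      (quotRangeMulVecLinEquivOfMul smith_A2gram_kronecker_E8gram).trans <|
        quotRangeDiagonalEquiv (Fin 8) 3

/-- For the cyclic permutation `ρ` of `L = E₈ ⊕ E₈ ⊕ E₈`: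
the coinvariant sublattice `L_ρ = (L^ρ)^⊥` equals `{(x,y,z) ∈ L : x + y + z = 0}`;
it has rank 16; its discriminant group is isomorphic to `(ℤ/3ℤ)⁸` (so `l = 8`); and
`L_ρ` admits no primitive embedding into any even unimodular lattice of signature
`(3, 19)`. -/
theorem statement17 :
    ((coinvRho : Set (Fin 3 → Fin 8 → ℤ)) = {u | u 0 + u 1 + u 2 = 0}) ∧
    Module.finrank ℤ coinvRho = 16 ∧
    Nonempty ((Fin 8 → ZMod 3) ≃+ DiscRho) ∧
    minGens DiscRho = 8 ∧
    ∀ (m : ℕ) (H : Matrix (Fin m) (Fin m) ℤ),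
      H.IsSymm → IsEvenLattice H → IsUnimodular H → HasSignature H 3 19 →
      ¬ ∃ f : coinvRho →ₗ[ℤ] (Fin m → ℤ),
          Function.Injective f ∧
          (∀ x y : coinvRho, bilin H (f x) (f y)
              = bT (x : Fin 3 → Fin 8 → ℤ) (y : Fin 3 → Fin 8 → ℤ)) ∧
          (∀ (y : Fin m → ℤ) (k : ℤ), k ≠ 0 →
            k • y ∈ LinearMap.range f → y ∈ LinearMap.range f) := by
  have hgens : minGens DiscRho = 8 :=
    (minGens_congr discRhoEquiv.toAddEquiv).trans (minGens_pi_zmod 8 3)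
  refine ⟨coe_coinvRho, finrank_coinvRho, ⟨discRhoEquiv.symm.toAddEquiv⟩, hgens, ?_⟩
  rintro m H - - hH ⟨hm, -⟩ ⟨f, hf, hB, hprim⟩
  have := minGens_add_finrank_le_of_primitive_embedding coinvRhoForm hH f hf hB hprim
  rw [hgens, finrank_coinvRho] at this
  omega
end
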